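/- arXiv:hep-th/0103254 — 2 statements merged into one kernel-verified Lean document; each statement's English description precedes it below -/
import Mathlib

section
/- Fix a real number z ≠ 0 and define S₀(t⁰,t¹) = exp(t⁰/z)·∑_{m≥0} exp(m·t¹)/((m!)²·z^{2m}) and S₁(t⁰,t¹) = exp(t⁰/z)·∑_{m≥0} exp((m+1)·t¹)/(m!·(m+1)!·z^{2m+1}) (these series converge for all real t⁰, t¹). Then S₀ and S₁ form a flat section of the genus-0 Frobenius structure of ℙ¹: for all (t⁰,t¹) ∈ ℝ², z·∂S₀/∂t⁰ = S₀, z·∂S₀/∂t¹ = S₁, z·∂S₁/∂t⁰ = S₁, and z·∂S₁/∂t¹ = exp(t¹)·S₀. -/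
/-!
Both series have the form `∑ cₘ exp(m t¹)` with `|cₘ| ≤ C Dᵐ / m!`, so they converge for all `t¹`
and may be differentiated termwise, `∂/∂t¹` acting on `exp(m t¹)` as multiplication by `m`
(for `S₁`, after splitting off the factor `exp t¹`). The `t¹`-equations then reduce to the
coefficient identities `(m+1) / ((m+1)!)² = 1 / (m! (m+1)!)`, after a shift of the summation
index, and `(1 + m) / (m! (m+1)!) = 1 / (m!)²`; the `t⁰`-equations only see the prefactor
`exp(t⁰/z)`.
-/

/-- `S₀(t⁰,t¹) = exp(t⁰/z) · ∑_{m≥0} exp(m·t¹)/((m!)²·z^{2m})`. -/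
noncomputable def S0 (z t0 t1 : ℝ) : ℝ :=
  Real.exp (t0 / z) *
    ∑' m : ℕ, Real.exp ((m : ℝ) * t1) / (((Nat.factorial m : ℝ)) ^ 2 * z ^ (2 * m))

/-- `S₁(t⁰,t¹) = exp(t⁰/z) · ∑_{m≥0} exp((m+1)·t¹)/(m!·(m+1)!·z^{2m+1})`. -/
noncomputable def S1 (z t0 t1 : ℝ) : ℝ :=
  Real.exp (t0 / z) *
    ∑' m : ℕ, Real.exp (((m : ℝ) + 1) * t1) /
      ((Nat.factorial m : ℝ) * (Nat.factorial (m + 1) : ℝ) * z ^ (2 * m + 1))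

open Real Nat

section ExpSeries

variable {c : ℕ → ℝ}

theorem summable_abs_mul_pow_of_abs_le {C D : ℝ} (hc : ∀ m, |c m| ≤ C * D ^ m / m !) (r : ℝ) :
    Summable fun m => |c m| * r ^ m := by
  refine .of_norm_bounded ((summable_pow_div_factorial (D * |r|)).mul_left C) fun m => ?_
  rw [norm_mul, norm_pow, Real.norm_eq_abs, Real.norm_eq_abs, abs_abs, mul_pow]
  calc |c m| * |r| ^ m ≤ C * D ^ m / m ! * |r| ^ m := by gcongr; exact hc m
    _ = C * (D ^ m * |r| ^ m / m !) := by ring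

theorem abs_natCast_mul_mul_exp_le {s t : ℝ} (hst : s ≤ t) (m : ℕ) :
    |m * c m * exp (m * s)| ≤ |c m| * (2 * exp t) ^ m := by
  rw [abs_mul, abs_mul, Nat.abs_cast, abs_of_pos (exp_pos _), mul_pow, ← exp_nat_mul]
  have hm : (m : ℝ) ≤ 2 ^ m := by exact_mod_cast m.lt_two_pow_self.le
  calc (m : ℝ) * |c m| * exp (m * s) ≤ 2 ^ m * |c m| * exp (m * t) := by gcongr
    _ = |c m| * (2 ^ m * exp (m * t)) := by ring

theorem summable_mul_exp_mul (hc : ∀ r, Summable fun m => |c m| * r ^ m) (t : ℝ) :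
    Summable fun m : ℕ => c m * exp (m * t) :=
  .of_norm_bounded (hc (exp t)) fun m => by
    rw [norm_mul, Real.norm_eq_abs, Real.norm_eq_abs, abs_of_pos (exp_pos _), exp_nat_mul]

theorem summable_natCast_mul_mul_exp_mul (hc : ∀ r, Summable fun m => |c m| * r ^ m)
    (t : ℝ) : Summable fun m : ℕ => m * c m * exp (m * t) :=
  .of_norm_bounded (hc (2 * exp t)) fun m => abs_natCast_mul_mul_exp_le le_rfl m

theorem hasDerivAt_tsum_mul_exp_mul (hc : ∀ r, Summable fun m => |c m| * r ^ m) (t : ℝ) :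
    HasDerivAt (fun s => ∑' m : ℕ, c m * exp (m * s)) (∑' m : ℕ, m * c m * exp (m * t)) t := by
  refine hasDerivAt_tsum_of_isPreconnected (g' := fun m s => m * c m * exp (m * s))
    (hc (2 * exp (t + 1))) isOpen_Iio (convex_Iio _).isPreconnected (fun m s _ => ?_)
    (fun m s hs => (Real.norm_eq_abs _).trans_le (abs_natCast_mul_mul_exp_le hs.le m))
    (lt_add_one t) (summable_mul_exp_mul hc t) (lt_add_one t)
  have h := ((hasDerivAt_id' s).const_mul (m : ℝ)).exp.const_mul (c m)
  rw [mul_one] at h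
  exact h.congr_deriv (by ring)

end ExpSeries

theorem inv_factorial_le_one (m : ℕ) : (m ! : ℝ)⁻¹ ≤ 1 :=
  inv_le_one_of_one_le₀ (by exact_mod_cast m.factorial_pos)

noncomputable def coeffS0 (z : ℝ) (m : ℕ) : ℝ := ((m ! : ℝ) ^ 2 * z ^ (2 * m))⁻¹

noncomputable def coeffS1 (z : ℝ) (m : ℕ) : ℝ := ((m ! : ℝ) * (m + 1)! * z ^ (2 * m + 1))⁻¹

theorem abs_coeffS0_le (z : ℝ) (m : ℕ) : |coeffS0 z m| ≤ 1 * (z ^ 2)⁻¹ ^ m / m ! := by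
  rw [coeffS0, pow_mul, abs_of_nonneg (by positivity), mul_inv, inv_pow, sq, mul_inv]
  calc (m ! : ℝ)⁻¹ * (m ! : ℝ)⁻¹ * ((z ^ 2) ^ m)⁻¹
      ≤ 1 * (m ! : ℝ)⁻¹ * ((z ^ 2) ^ m)⁻¹ := by gcongr; exact inv_factorial_le_one m
    _ = _ := by ring

theorem abs_coeffS1_le (z : ℝ) (m : ℕ) : |coeffS1 z m| ≤ |z|⁻¹ * (z ^ 2)⁻¹ ^ m / m ! := by
  have hz : |(z ^ 2) ^ m| = (z ^ 2) ^ m := abs_of_nonneg (by positivity)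
  rw [coeffS1, pow_succ, pow_mul, abs_inv, abs_mul, abs_mul, abs_mul, hz, Nat.abs_cast,
    Nat.abs_cast, mul_inv, mul_inv, mul_inv, inv_pow]
  calc (m ! : ℝ)⁻¹ * ((m + 1)! : ℝ)⁻¹ * (((z ^ 2) ^ m)⁻¹ * |z|⁻¹)
      ≤ (m ! : ℝ)⁻¹ * 1 * (((z ^ 2) ^ m)⁻¹ * |z|⁻¹) := by gcongr; exact inv_factorial_le_one _
    _ = _ := by ring

theorem natCast_succ_mul_coeffS0_succ (z : ℝ) (m : ℕ) :
    ((m + 1 : ℕ) : ℝ) * coeffS0 z (m + 1) = z⁻¹ * coeffS1 z m := by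
  rw [coeffS0, coeffS1, factorial_succ m, Nat.cast_mul, mul_pow, sq, mul_add, mul_one,
    pow_succ z (2 * m + 1)]
  field_simp

theorem coeffS1_add_natCast_mul_coeffS1 (z : ℝ) (m : ℕ) :
    coeffS1 z m + m * coeffS1 z m = z⁻¹ * coeffS0 z m := by
  rw [coeffS0, coeffS1, factorial_succ m, Nat.cast_mul, pow_succ]
  field_simp
  push_cast
  ring

theorem S0_eq_tsum (z t0 t1 : ℝ) :
    S0 z t0 t1 = exp (t0 / z) * ∑' m : ℕ, coeffS0 z m * exp (m * t1) := by
  rw [S0]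
  congr 1
  exact tsum_congr fun m => div_eq_inv_mul _ _

theorem exp_succ_mul_div_eq (z t : ℝ) (m : ℕ) :
    exp ((m + 1) * t) / (m ! * (m + 1)! * z ^ (2 * m + 1)) =
      exp t * (coeffS1 z m * exp (m * t)) := by
  rw [coeffS1, div_eq_inv_mul, add_mul, one_mul, exp_add]
  ring

theorem S1_eq_tsum (z t0 t1 : ℝ) :
    S1 z t0 t1 = exp (t0 / z) * (exp t1 * ∑' m : ℕ, coeffS1 z m * exp (m * t1)) := by
  rw [S1, tsum_congr (exp_succ_mul_div_eq z t1), tsum_mul_left]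

theorem tsum_natCast_mul_coeffS0_mul_exp (z t : ℝ) :
    ∑' m : ℕ, m * coeffS0 z m * exp (m * t) =
      z⁻¹ * (exp t * ∑' m : ℕ, coeffS1 z m * exp (m * t)) := by
  rw [(summable_natCast_mul_mul_exp_mul (summable_abs_mul_pow_of_abs_le (abs_coeffS0_le z))
    t).tsum_eq_zero_add, ← tsum_mul_left, ← tsum_mul_left]
  simp only [Nat.cast_zero, zero_mul, zero_add]
  refine tsum_congr fun m => ?_
  rw [natCast_succ_mul_coeffS0_succ, Nat.cast_succ, add_mul, one_mul, exp_add]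
  ring

theorem tsum_coeffS1_mul_exp_add_tsum_natCast_mul (z t : ℝ) :
    ∑' m : ℕ, coeffS1 z m * exp (m * t) + ∑' m : ℕ, m * coeffS1 z m * exp (m * t) =
      z⁻¹ * ∑' m : ℕ, coeffS0 z m * exp (m * t) := by
  have hc := summable_abs_mul_pow_of_abs_le (abs_coeffS1_le z)
  rw [← (summable_mul_exp_mul hc t).tsum_add (summable_natCast_mul_mul_exp_mul hc t),
    ← tsum_mul_left]
  refine tsum_congr fun m => ?_
  rw [← mul_assoc, ← coeffS1_add_natCast_mul_coeffS1]
  ring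

theorem hasDerivAt_exp_div_mul (z a t : ℝ) :
    HasDerivAt (fun s => exp (s / z) * a) (exp (t / z) * a / z) t :=
  (((hasDerivAt_id' t).div_const z).exp.mul_const a).congr_deriv (by ring)

theorem hasDerivAt_S0_t1 (z t0 t1 : ℝ) :
    HasDerivAt (fun s => S0 z t0 s) (S1 z t0 t1 / z) t1 := by
  have h := (hasDerivAt_tsum_mul_exp_mul
    (summable_abs_mul_pow_of_abs_le (abs_coeffS0_le z)) t1).const_mul (exp (t0 / z))
  simp only [← S0_eq_tsum, tsum_natCast_mul_coeffS0_mul_exp] at h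
  refine h.congr_deriv ?_
  rw [S1_eq_tsum]
  ring

theorem hasDerivAt_S1_t1 (z t0 t1 : ℝ) :
    HasDerivAt (fun s => S1 z t0 s) (exp t1 * S0 z t0 t1 / z) t1 := by
  have h := ((hasDerivAt_exp t1).fun_mul (hasDerivAt_tsum_mul_exp_mul
    (summable_abs_mul_pow_of_abs_le (abs_coeffS1_le z)) t1)).const_mul (exp (t0 / z))
  simp only [← S1_eq_tsum] at h
  refine h.congr_deriv ?_
  rw [S0_eq_tsum, ← mul_add, tsum_coeffS1_mul_exp_add_tsum_natCast_mul]
  ring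

theorem stmt4_general (z : ℝ) :
    (∀ t1 : ℝ,
      Summable (fun m : ℕ =>
        Real.exp ((m : ℝ) * t1) / (((Nat.factorial m : ℝ)) ^ 2 * z ^ (2 * m))) ∧
      Summable (fun m : ℕ =>
        Real.exp (((m : ℝ) + 1) * t1) /
          ((Nat.factorial m : ℝ) * (Nat.factorial (m + 1) : ℝ) * z ^ (2 * m + 1)))) ∧
    ∀ t0 t1 : ℝ,
      HasDerivAt (fun s => S0 z s t1) (S0 z t0 t1 / z) t0 ∧
      HasDerivAt (fun s => S0 z t0 s) (S1 z t0 t1 / z) t1 ∧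
      HasDerivAt (fun s => S1 z s t1) (S1 z t0 t1 / z) t0 ∧
      HasDerivAt (fun s => S1 z t0 s) (Real.exp t1 * S0 z t0 t1 / z) t1 := by
  have hc0 := summable_abs_mul_pow_of_abs_le (abs_coeffS0_le z)
  have hc1 := summable_abs_mul_pow_of_abs_le (abs_coeffS1_le z)
  refine ⟨fun t1 => ⟨?_, ?_⟩, fun t0 t1 =>
    ⟨?_, hasDerivAt_S0_t1 z t0 t1, ?_, hasDerivAt_S1_t1 z t0 t1⟩⟩
  · exact (summable_mul_exp_mul hc0 t1).congr fun m => (div_eq_inv_mul _ _).symm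
  · exact ((summable_mul_exp_mul hc1 t1).mul_left (exp t1)).congr
      fun m => (exp_succ_mul_div_eq z t1 m).symm
  · exact hasDerivAt_exp_div_mul z _ t0
  · exact hasDerivAt_exp_div_mul z _ t0

/-- For any fixed real `z ≠ 0`, the series defining `S₀` and `S₁` converge for
all real `t⁰, t¹`, and `(S₀, S₁)` is a flat section of the genus-0 Frobenius
structure of ℙ¹: `z·∂S₀/∂t⁰ = S₀`, `z·∂S₀/∂t¹ = S₁`, `z·∂S₁/∂t⁰ = S₁`, and
`z·∂S₁/∂t¹ = exp(t¹)·S₀`. -/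
theorem stmt4 (z : ℝ) (hz : z ≠ 0) :
    (∀ t1 : ℝ,
      Summable (fun m : ℕ =>
        Real.exp ((m : ℝ) * t1) / (((Nat.factorial m : ℝ)) ^ 2 * z ^ (2 * m))) ∧
      Summable (fun m : ℕ =>
        Real.exp (((m : ℝ) + 1) * t1) /
          ((Nat.factorial m : ℝ) * (Nat.factorial (m + 1) : ℝ) * z ^ (2 * m + 1)))) ∧
    ∀ t0 t1 : ℝ,
      HasDerivAt (fun s => S0 z s t1) (S0 z t0 t1 / z) t0 ∧
      HasDerivAt (fun s => S0 z t0 s) (S1 z t0 t1 / z) t1 ∧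
      HasDerivAt (fun s => S1 z s t1) (S1 z t0 t1 / z) t0 ∧
      HasDerivAt (fun s => S1 z t0 s) (Real.exp t1 * S0 z t0 t1 / z) t1 :=
  stmt4_general z
end

section
/- Fix a real number z ≠ 0 and let H_m = ∑_{k=1}^{m} 1/k denote the m-th harmonic number. Define S(t⁰,t¹) = (2/z)·exp(t⁰/z)·[ (t¹/2)·∑_{m≥0} exp(m·t¹)/((m!)²·z^{2m}) − ∑_{m≥1} H_m·exp(m·t¹)/((m!)²·z^{2m}) ] (the series converge for all real t⁰, t¹). Then for all (t⁰,t¹) ∈ ℝ²: z·∂S/∂t⁰ = S and z·∂/∂t¹(z·∂S/∂t¹) = exp(t¹)·S. (This is the first component S₀₀ of the second flat section, built from the modified Bessel function K₀.) -/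
/-!
Both series are power series in `x = exp t¹` whose coefficients decay like `1/(m!)²`, so they may
be differentiated termwise, `∂/∂t¹` acting on coefficients as `c_m ↦ m c_m`. Write
`c_m = 1/((m!)² z^{2m})`, `A = ∑ c_m e^{mt}` (a rescaled `I₀`), `B = ∑ H_m c_m e^{mt}` and
`P = ∑ c_m e^{mt}/(m+1)`. Since `z² (m+1)² c_{m+1} = c_m` and `H_{m+1} = H_m + 1/(m+1)`, shifting the
summation index gives `z² A'' = e^t A`, `z² A' = e^t P` and `z² B'' = e^t (B + P)`; hence
`K = t A/2 - B` satisfies `z² K'' = z² A' + (t/2) e^t A - e^t (B + P) = e^t K`. The `t⁰`-dependence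
of `S` is the factor `exp (t⁰/z)`.
-/

/-- The `m`-th harmonic number `H_m = ∑_{k=1}^m 1/k` (with `H_0 = 0`). -/
noncomputable def harm (m : ℕ) : ℝ := ∑ k ∈ Finset.range m, 1 / ((k : ℝ) + 1)

/-- `S(t⁰,t¹) = (2/z)·exp(t⁰/z)·[(t¹/2)·∑_{m≥0} exp(m·t¹)/((m!)²·z^{2m})
  − ∑_{m≥1} H_m·exp(m·t¹)/((m!)²·z^{2m})]` (the `m = 0` term of the second
series vanishes since `H_0 = 0`). -/
noncomputable def Sk (z t0 t1 : ℝ) : ℝ :=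
  (2 / z) * Real.exp (t0 / z) *
    ((t1 / 2) * ∑' m : ℕ, Real.exp ((m : ℝ) * t1) / (((Nat.factorial m : ℝ)) ^ 2 * z ^ (2 * m))
      - ∑' m : ℕ, harm m * Real.exp ((m : ℝ) * t1) / (((Nat.factorial m : ℝ)) ^ 2 * z ^ (2 * m)))

open Real

noncomputable def expSum (d : ℕ → ℝ) (t : ℝ) : ℝ := ∑' m : ℕ, d m * exp (m * t)

/-- `d/dt` acts on `expSum d` as the Euler operator `x d/dx` on `∑ d m xᵐ`, `x = exp t`. -/
def eulerCoeff (d : ℕ → ℝ) (m : ℕ) : ℝ := m * d m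

def EntireCoeffs (d : ℕ → ℝ) : Prop := ∀ R : ℝ, 0 ≤ R → Summable fun m => |d m| * R ^ m

namespace EntireCoeffs

variable {d : ℕ → ℝ}

theorem summable_abs_mul_exp (hd : EntireCoeffs d) (t : ℝ) :
    Summable fun m : ℕ => |d m| * exp (m * t) :=
  (hd _ (exp_pos t).le).congr fun m => by rw [exp_nat_mul]

theorem summable_mul_exp (hd : EntireCoeffs d) (t : ℝ) :
    Summable fun m : ℕ => d m * exp (m * t) :=
  .of_abs <| (hd.summable_abs_mul_exp t).congr fun m => by
    rw [abs_mul, abs_of_pos (exp_pos _)]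

theorem mul_of_abs_le_pow (hd : EntireCoeffs d) {g : ℕ → ℝ} {C : ℝ} (hg : ∀ m, |g m| ≤ C ^ m) :
    EntireCoeffs fun m => g m * d m := by
  intro R hR
  have hC : 0 ≤ C := (abs_nonneg _).trans (by simpa using hg 1)
  refine (hd _ (mul_nonneg hC hR)).of_nonneg_of_le (fun m => by positivity) fun m => ?_
  calc |g m * d m| * R ^ m ≤ C ^ m * |d m| * R ^ m := by
        rw [abs_mul]; gcongr; exact hg m
    _ = |d m| * (C * R) ^ m := by ring

theorem eulerCoeff (hd : EntireCoeffs d) : EntireCoeffs (_root_.eulerCoeff d) :=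
  hd.mul_of_abs_le_pow (C := 2) fun m => by
    rw [Nat.abs_cast]
    exact_mod_cast Nat.lt_two_pow_self.le

theorem hasDerivAt_expSum (hd : EntireCoeffs d) (t : ℝ) :
    HasDerivAt (expSum d) (expSum (_root_.eulerCoeff d) t) t := by
  have ht : t ∈ Set.Ioo (t - 1) (t + 1) := ⟨by linarith, by linarith⟩
  refine hasDerivAt_tsum_of_isPreconnected (g := fun m s => d m * exp (m * s))
    (g' := fun m s => _root_.eulerCoeff d m * exp (m * s))
    (hd.eulerCoeff.summable_abs_mul_exp (t + 1)) isOpen_Ioo isPreconnected_Ioo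
    (fun m s _ => ?_) (fun m s hs => ?_) ht (hd.summable_mul_exp t) ht
  · exact (((hasDerivAt_id s).const_mul (m : ℝ)).exp.const_mul (d m)).congr_deriv
      (by simp only [_root_.eulerCoeff, id, mul_one]; ring)
  · rw [Real.norm_eq_abs, abs_mul, abs_of_pos (exp_pos _)]
    gcongr
    exact hs.2.le

end EntireCoeffs

theorem expSum_const_mul (a : ℝ) (d : ℕ → ℝ) (t : ℝ) :
    expSum (fun m => a * d m) t = a * expSum d t := by
  rw [expSum, expSum, ← tsum_mul_left]
  exact tsum_congr fun m => by ring

theorem expSum_add {d e : ℕ → ℝ} {t : ℝ} (hd : Summable fun m : ℕ => d m * exp (m * t))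
    (he : Summable fun m : ℕ => e m * exp (m * t)) :
    expSum (d + e) t = expSum d t + expSum e t := by
  rw [expSum, expSum, expSum, ← hd.tsum_add he]
  exact tsum_congr fun m => by simp only [Pi.add_apply]; ring

theorem expSum_eq_exp_mul_of_shift {d e : ℕ → ℝ} {t : ℝ}
    (he : Summable fun m : ℕ => e m * exp (m * t)) (h0 : d 0 = 0) (hsucc : ∀ m, d (m + 1) = e m) :
    expSum d t = exp t * expSum e t := by
  have hshift : (fun m : ℕ => d (m + 1) * exp ((m + 1 : ℕ) * t))
      = fun m : ℕ => exp t * (e m * exp (m * t)) := by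
    funext m
    rw [hsucc, Nat.cast_succ, add_mul, one_mul, exp_add]
    ring
  rw [expSum, tsum_eq_zero_add' (by rw [hshift]; exact he.mul_left _), h0, zero_mul, zero_add,
    hshift, tsum_mul_left, expSum]

noncomputable def besselCoeff (z : ℝ) (m : ℕ) : ℝ := 1 / ((m.factorial : ℝ) ^ 2 * z ^ (2 * m))

noncomputable def harmBesselCoeff (z : ℝ) (m : ℕ) : ℝ := harm m * besselCoeff z m

theorem harm_succ (m : ℕ) : harm (m + 1) = harm m + (m + 1 : ℝ)⁻¹ := by
  rw [harm, harm, Finset.sum_range_succ, one_div]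

theorem abs_harm_le_two_pow (m : ℕ) : |harm m| ≤ 2 ^ m := by
  have hle : harm m ≤ m := by
    calc harm m ≤ ∑ _k ∈ Finset.range m, (1 : ℝ) :=
          Finset.sum_le_sum fun k _ => div_le_one_of_le₀ (by linarith [k.cast_nonneg (α := ℝ)])
            (by positivity)
      _ = m := by simp
  rw [abs_of_nonneg (Finset.sum_nonneg fun k _ => by positivity)]
  exact hle.trans (by exact_mod_cast Nat.lt_two_pow_self.le)

theorem entireCoeffs_besselCoeff (z : ℝ) : EntireCoeffs (besselCoeff z) := by
  intro R hR
  refine (Real.summable_pow_div_factorial (R / z ^ 2)).of_nonneg_of_le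
    (fun m => by positivity) fun m => ?_
  have hfact : (1 : ℝ) ≤ m.factorial := by exact_mod_cast m.factorial_pos
  calc |besselCoeff z m| * R ^ m = (R / z ^ 2) ^ m / (m.factorial : ℝ) ^ 2 := by
        rw [besselCoeff, pow_mul, abs_of_nonneg (by positivity), div_pow]
        ring
    _ ≤ (R / z ^ 2) ^ m / m.factorial :=
        div_le_div_of_nonneg_left (by positivity) (by positivity) (by nlinarith)

theorem entireCoeffs_harmBesselCoeff (z : ℝ) : EntireCoeffs (harmBesselCoeff z) :=
  (entireCoeffs_besselCoeff z).mul_of_abs_le_pow abs_harm_le_two_pow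

theorem entireCoeffs_inv_succ_mul_besselCoeff (z : ℝ) :
    EntireCoeffs fun m => (m + 1 : ℝ)⁻¹ * besselCoeff z m :=
  (entireCoeffs_besselCoeff z).mul_of_abs_le_pow (C := 1) fun m => by
    rw [one_pow, abs_inv, inv_le_one₀ (by positivity)]
    exact le_abs.2 (.inl (by linarith [m.cast_nonneg (α := ℝ)]))

theorem sq_mul_sq_mul_besselCoeff_succ {z : ℝ} (hz : z ≠ 0) (m : ℕ) :
    z ^ 2 * ((m + 1 : ℝ) ^ 2 * besselCoeff z (m + 1)) = besselCoeff z m := by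
  have hm : (m + 1 : ℝ) ≠ 0 := by positivity
  rw [besselCoeff, besselCoeff, Nat.factorial_succ]
  push_cast
  field_simp
  ring

theorem sq_mul_expSum_eulerCoeff_eulerCoeff_besselCoeff {z : ℝ} (hz : z ≠ 0) (t : ℝ) :
    z ^ 2 * expSum (eulerCoeff (eulerCoeff (besselCoeff z))) t
      = exp t * expSum (besselCoeff z) t := by
  rw [← expSum_const_mul]
  refine expSum_eq_exp_mul_of_shift ((entireCoeffs_besselCoeff z).summable_mul_exp t)
    (by simp [eulerCoeff]) fun m => ?_
  rw [← sq_mul_sq_mul_besselCoeff_succ hz m, eulerCoeff, eulerCoeff]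
  push_cast
  ring

theorem sq_mul_expSum_eulerCoeff_besselCoeff {z : ℝ} (hz : z ≠ 0) (t : ℝ) :
    z ^ 2 * expSum (eulerCoeff (besselCoeff z)) t
      = exp t * expSum (fun m => (m + 1 : ℝ)⁻¹ * besselCoeff z m) t := by
  rw [← expSum_const_mul]
  refine expSum_eq_exp_mul_of_shift ((entireCoeffs_inv_succ_mul_besselCoeff z).summable_mul_exp t)
    (by simp [eulerCoeff]) fun m => ?_
  have hm : (m + 1 : ℝ) ≠ 0 := by positivity
  rw [← sq_mul_sq_mul_besselCoeff_succ hz m, eulerCoeff]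
  push_cast
  field_simp

theorem sq_mul_expSum_eulerCoeff_eulerCoeff_harmBesselCoeff {z : ℝ} (hz : z ≠ 0) (t : ℝ) :
    z ^ 2 * expSum (eulerCoeff (eulerCoeff (harmBesselCoeff z))) t
      = exp t * (expSum (harmBesselCoeff z) t
          + expSum (fun m => (m + 1 : ℝ)⁻¹ * besselCoeff z m) t) := by
  have hB := (entireCoeffs_harmBesselCoeff z).summable_mul_exp t
  have hP := (entireCoeffs_inv_succ_mul_besselCoeff z).summable_mul_exp t
  rw [← expSum_const_mul, ← expSum_add hB hP]
  refine expSum_eq_exp_mul_of_shift (by simpa only [Pi.add_apply, add_mul] using hB.add hP)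
    (by simp [eulerCoeff]) fun m => ?_
  rw [Pi.add_apply, harmBesselCoeff, ← sq_mul_sq_mul_besselCoeff_succ hz m, eulerCoeff, eulerCoeff,
    harmBesselCoeff, harm_succ]
  push_cast
  ring

noncomputable def kSeries (z t : ℝ) : ℝ :=
  t / 2 * expSum (besselCoeff z) t - expSum (harmBesselCoeff z) t

theorem Sk_eq_mul_kSeries (z t0 t1 : ℝ) : Sk z t0 t1 = 2 / z * exp (t0 / z) * kSeries z t1 := by
  rw [Sk, kSeries, expSum, expSum]
  congr 3
  · exact tsum_congr fun m => by rw [besselCoeff]; ring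
  · exact funext fun m => by rw [harmBesselCoeff, besselCoeff]; ring

theorem hasDerivAt_kSeries (z t : ℝ) :
    HasDerivAt (kSeries z) (expSum (besselCoeff z) t / 2
      + t / 2 * expSum (eulerCoeff (besselCoeff z)) t
      - expSum (eulerCoeff (harmBesselCoeff z)) t) t := by
  have := (((hasDerivAt_id t).div_const 2).mul
    ((entireCoeffs_besselCoeff z).hasDerivAt_expSum t)).sub
    ((entireCoeffs_harmBesselCoeff z).hasDerivAt_expSum t)
  exact this.congr_deriv (by simp only [id]; ring)

theorem hasDerivAt_deriv_kSeries {z : ℝ} (hz : z ≠ 0) (t : ℝ) :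
    HasDerivAt (deriv (kSeries z)) (exp t * kSeries z t / z ^ 2) t := by
  have hA := entireCoeffs_besselCoeff z
  have hB := entireCoeffs_harmBesselCoeff z
  rw [funext fun s => (hasDerivAt_kSeries z s).deriv]
  refine (((hA.hasDerivAt_expSum t).div_const 2).add (((hasDerivAt_id t).div_const 2).mul
    (hA.eulerCoeff.hasDerivAt_expSum t))).sub (hB.eulerCoeff.hasDerivAt_expSum t) |>.congr_deriv ?_
  rw [kSeries, eq_div_iff (pow_ne_zero 2 hz)]
  simp only [id]
  linear_combination sq_mul_expSum_eulerCoeff_besselCoeff hz t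
    + t / 2 * sq_mul_expSum_eulerCoeff_eulerCoeff_besselCoeff hz t
    - sq_mul_expSum_eulerCoeff_eulerCoeff_harmBesselCoeff hz t

/-- For any fixed real `z ≠ 0`: the series converge for all real `t⁰, t¹`, and
`S` (the component `S₀₀` of the second flat section, built from the modified
Bessel function `K₀`) satisfies `z·∂S/∂t⁰ = S` and
`z·∂/∂t¹(z·∂S/∂t¹) = exp(t¹)·S`. -/
theorem stmt5 (z : ℝ) (hz : z ≠ 0) :
    (∀ t1 : ℝ,
      Summable (fun m : ℕ =>
        Real.exp ((m : ℝ) * t1) / (((Nat.factorial m : ℝ)) ^ 2 * z ^ (2 * m))) ∧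
      Summable (fun m : ℕ =>
        harm m * Real.exp ((m : ℝ) * t1) / (((Nat.factorial m : ℝ)) ^ 2 * z ^ (2 * m)))) ∧
    ∀ t0 t1 : ℝ,
      HasDerivAt (fun s => Sk z s t1) (Sk z t0 t1 / z) t0 ∧
      DifferentiableAt ℝ (fun s => Sk z t0 s) t1 ∧
      HasDerivAt (fun s => z * deriv (fun u => Sk z t0 u) s)
        (Real.exp t1 * Sk z t0 t1 / z) t1 := by
  refine ⟨fun t1 => ⟨?_, ?_⟩, fun t0 t1 => ⟨?_, ?_, ?_⟩⟩
  · exact ((entireCoeffs_besselCoeff z).summable_mul_exp t1).congr fun m => by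
      rw [besselCoeff]; ring
  · exact ((entireCoeffs_harmBesselCoeff z).summable_mul_exp t1).congr fun m => by
      rw [harmBesselCoeff, besselCoeff]; ring
  · simp only [Sk_eq_mul_kSeries]
    refine ((((hasDerivAt_id t0).div_const z).exp.const_mul (2 / z)).mul_const
      (kSeries z t1)).congr_deriv ?_
    simp only [id]
    ring
  · simp only [Sk_eq_mul_kSeries]
    exact (hasDerivAt_kSeries z t1).differentiableAt.const_mul _
  · simp only [Sk_eq_mul_kSeries, deriv_const_mul_field']
    refine (((hasDerivAt_deriv_kSeries hz t1).const_mul (2 / z * exp (t0 / z))).const_mul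
      z).congr_deriv ?_
    field_simp
end
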